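/- Let μ_p = (1/18)(9 − 4√3), and for μ ∈ [0,1/2] let d(μ) = √(1 − 3μ + 3μ²). Then μ_p ∈ (0, 1/2), and for all μ ∈ [0, 1/2]: d(μ) ≥ 5/6 if and only if μ ≤ μ_p. Equivalently, since r is strictly decreasing with r(5/6) = 1, the frequency ratio satisfies r(d(μ)) ≤ 1 if and only if μ ∈ [0, μ_p]; this is the range of mass parameters for which local spatial periodic motion of class (c) exists around the equilibrium L₁. -/
import Mathlib

noncomputable section

/-- The frequency ratio `r(d) = √(6d + 10)/√(−1 − 3d + √(1 + 222d + 225d²))` at the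
equilibrium `L₁` of the spatial Hill four-body problem. -/
def rfun (d : ℝ) : ℝ :=
  Real.sqrt (6*d + 10) / Real.sqrt (-1 - 3*d + Real.sqrt (1 + 222*d + 225*d^2))

/-- `d(μ) = √(1 − 3μ + 3μ²)`. -/
def dparam (μ : ℝ) : ℝ := Real.sqrt (1 - 3*μ + 3*μ^2)

/-- `μ_p = (1/18)(9 − 4√3)`. -/
def mup : ℝ := (1/18) * (9 - 4 * Real.sqrt 3)

lemma sqrt3_lt : Real.sqrt 3 < 1.8 := by
  rw [show (1.8:ℝ) = Real.sqrt (1.8^2) by rw [Real.sqrt_sq]; norm_num]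
  exact Real.sqrt_lt_sqrt (by norm_num) (by norm_num)

lemma sqrt3_gt : (1.7:ℝ) < Real.sqrt 3 := by
  rw [show (1.7:ℝ) = Real.sqrt (1.7^2) by rw [Real.sqrt_sq]; norm_num]
  exact Real.sqrt_lt_sqrt (by norm_num) (by norm_num)

lemma sq3 : Real.sqrt 3 ^ 2 = 3 := Real.sq_sqrt (by norm_num)

lemma dparam_iff (μ : ℝ) (h0 : 0 ≤ μ) (h1 : μ ≤ 1/2) :
    5/6 ≤ dparam μ ↔ μ ≤ mup := by
  have harg : (0:ℝ) ≤ 1 - 3*μ + 3*μ^2 := by nlinarith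
  rw [dparam, show (5/6:ℝ) = Real.sqrt ((5/6)^2) by rw [Real.sqrt_sq]; norm_num,
    Real.sqrt_le_sqrt_iff harg]
  have s2 := sq3
  have sl := sqrt3_lt
  have sg := sqrt3_gt
  constructor
  · intro h
    rw [mup]
    by_contra hc
    push_neg at hc
    nlinarith [sq_nonneg (μ - (1/18)*(9 - 4*Real.sqrt 3))]
  · intro h
    rw [mup] at h
    nlinarith [sq_nonneg (Real.sqrt 3 * (μ - (1/18)*(9 - 4*Real.sqrt 3)))]

lemma rfun_iff (d : ℝ) (hd : 1/2 ≤ d) : rfun d ≤ 1 ↔ 5/6 ≤ d := by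
  set S := Real.sqrt (1 + 222*d + 225*d^2) with hS
  have hargS : (0:ℝ) ≤ 1 + 222*d + 225*d^2 := by nlinarith
  have hS2 : S^2 = 1 + 222*d + 225*d^2 := Real.sq_sqrt hargS
  have hSnn : 0 ≤ S := Real.sqrt_nonneg _
  have hSgt : 1 + 3*d < S := by
    nlinarith [hS2, hSnn]
  have hD : 0 < -1 - 3*d + S := by linarith
  have hsqD : 0 < Real.sqrt (-1 - 3*d + S) := Real.sqrt_pos.mpr hD
  rw [rfun, div_le_one hsqD, Real.sqrt_le_sqrt_iff (by nlinarith)]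
  constructor
  · intro h
    have h2 : 11 + 9*d ≤ S := by linarith
    nlinarith [hS2]
  · intro h
    have h2 : (11 + 9*d)^2 ≤ S^2 := by nlinarith [hS2]
    have : 11 + 9*d ≤ S := by nlinarith [hS2, hSnn]
    linarith

/-- `μ_p ∈ (0, 1/2)` and, for `μ ∈ [0, 1/2]`, `d(μ) ≥ 5/6` if and only if `μ ≤ μ_p`;
equivalently, the frequency ratio satisfies `r(d(μ)) ≤ 1` if and only if `μ ∈ [0, μ_p]`:
this is the range of mass parameters for which local spatial periodic motion of class (c)
exists around the equilibrium `L₁`. -/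
theorem class_c_motion_range :
    mup ∈ Set.Ioo (0:ℝ) (1/2) ∧
    (∀ μ ∈ Set.Icc (0:ℝ) (1/2), (5/6 ≤ dparam μ ↔ μ ≤ mup)) ∧
    (∀ μ ∈ Set.Icc (0:ℝ) (1/2), (rfun (dparam μ) ≤ 1 ↔ μ ≤ mup)) := by
  have sl := sqrt3_lt
  have sg := sqrt3_gt
  refine ⟨⟨by rw [mup]; nlinarith, by rw [mup]; nlinarith⟩, fun μ hμ => dparam_iff μ hμ.1 hμ.2,
    fun μ hμ => ?_⟩
  have hd : 1/2 ≤ dparam μ := by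
    rw [dparam, show (1/2:ℝ) = Real.sqrt ((1/2)^2) by rw [Real.sqrt_sq]; norm_num]
    exact Real.sqrt_le_sqrt (by nlinarith [hμ.1, hμ.2, sq_nonneg (μ - 1/2)])
  rw [rfun_iff _ hd]
  exact dparam_iff μ hμ.1 hμ.2

end
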